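/- Let G be a K-edge-connected finite simple graph, let T̃ be a spanning tree of G with congestion at most K, and let ∂Z be a K-cut of G that does not cross any K-cut of G. Then all edges in T̃ ∩ ∂Z have a common endpoint; that is, there is a vertex w of G such that every edge of T̃ belonging to ∂Z is incident to w. -/

import Mathlib

open SimpleGraph

variable {V : Type*}

/-- The cut `∂X`: the set of edges of `G` with exactly one endpoint in `X`. -/
def cutEdges (G : SimpleGraph V) (X : Set V) : Set (Sym2 V) :=
  {e | e ∈ G.edgeSet ∧ ∃ u v, e = s(u, v) ∧ u ∈ X ∧ v ∉ X}

/-- `G` is `K`-edge-connected: at least two vertices, connected, and every cut has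
at least `K` edges. -/
def KEdgeConnected (G : SimpleGraph V) (K : ℕ) : Prop :=
  Nontrivial V ∧ G.Connected ∧
    ∀ X : Set V, X.Nonempty → X ≠ Set.univ → K ≤ (cutEdges G X).ncard

/-- `∂X` is a `K`-cut. -/
def IsKCut (G : SimpleGraph V) (K : ℕ) (X : Set V) : Prop :=
  X.Nonempty ∧ X ≠ Set.univ ∧ (cutEdges G X).ncard = K

/-- The cuts `∂X` and `∂Y` cross. -/
def Crossing (X Y : Set V) : Prop :=
  (X ∩ Y).Nonempty ∧ (X ∩ Yᶜ).Nonempty ∧ (Xᶜ ∩ Y).Nonempty ∧ (Xᶜ ∩ Yᶜ).Nonempty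

/-- The set of vertices reachable from `u` in `T` after deleting the edge `e`;
for a spanning tree `T` and an edge `e` of `T` with endpoint `u`, this is the shore
of the cut induced by `e` containing `u`. -/
def treeSide (T : SimpleGraph V) (u : V) (e : Sym2 V) : Set V :=
  {x | (T.deleteEdges {e}).Reachable u x}

/-- The congestion of the edge `(u,v)` of a spanning tree `T` of `G`. -/
noncomputable def edgeCong (G T : SimpleGraph V) (u v : V) : ℕ :=
  (cutEdges G (treeSide T u s(u, v))).ncard

/-- The spanning tree `T` of `G` has congestion at most `K`. -/
def CongAtMost (G T : SimpleGraph V) (K : ℕ) : Prop :=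
  ∀ u v, T.Adj u v → edgeCong G T u v ≤ K

/-- The congestion of a spanning tree `T` of `G`. -/
noncomputable def treeCongestion (G T : SimpleGraph V) : ℕ :=
  sSup {n | ∃ u v, T.Adj u v ∧ n = edgeCong G T u v}

/-- The spanning-tree congestion of `G`. -/
noncomputable def stc (G : SimpleGraph V) : ℕ :=
  sInf {n | ∃ T : SimpleGraph V, T ≤ G ∧ T.IsTree ∧ treeCongestion G T = n}

/-- `T_out(w,e)`: the vertex set of the component of the tree `H − e` not containing `w`
(the vertices of `H` that are no longer reachable from `w` after deleting `e`). -/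
def treeOut (G : SimpleGraph V) (H : G.Subgraph) (w : V) (e : Sym2 V) : Set V :=
  {x ∈ H.verts | ¬ (H.deleteEdges {e}).spanningCoe.Reachable w x}

/-- The rooted tree `(H, w)` is safe (with parameter `K`). -/
def SafeTree (G : SimpleGraph V) (K : ℕ) (H : G.Subgraph) (w : V) : Prop :=
  ∀ e ∈ H.edgeSet, (cutEdges G (treeOut G H w e)).ncard = K

/-- `V(∂X)`: the set of endpoints of edges of the cut `∂X`. -/
def cutVerts (G : SimpleGraph V) (X : Set V) : Set V :=
  {v | ∃ e ∈ cutEdges G X, v ∈ e}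

/-- `w` is a hub for `Z`: `w ∈ V(∂Z)` and there is a spanning tree `H` of the subgraph
of `G` induced by `Z ∪ {w}` such that `(H, w)` is a safe tree. -/
def IsHub (G : SimpleGraph V) (K : ℕ) (Z : Set V) (w : V) : Prop :=
  w ∈ cutVerts G Z ∧
    ∃ H : G.Subgraph, H.verts = Z ∪ {w} ∧ H.coe.IsTree ∧ SafeTree G K H w

/-- `H̃(Z)`: the set of all hubs for `Z`. -/
def hubSet (G : SimpleGraph V) (K : ℕ) (Z : Set V) : Set V :=
  {w | IsHub G K Z w}

/-- `N(S)`: the set of vertices adjacent in `G` to some vertex of `S`. -/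
def nbrSet (G : SimpleGraph V) (S : Set V) : Set V :=
  {v | ∃ u ∈ S, G.Adj u v}

/-- Edges of `∂X` with both endpoints in `S`. -/
def cutRestrict (G : SimpleGraph V) (X S : Set V) : Set (Sym2 V) :=
  {e ∈ cutEdges G X | ∀ v ∈ e, v ∈ S}

/-!
If two tree edges `e, f ∈ ∂Z` were disjoint, the first edge `g` of the tree path joining them
would have `e` on one side of its fundamental cut and `f` on the other. That cut has at most `K`
edges by the congestion bound and at least `K` by edge-connectivity, so it is a `K`-cut; and it
crosses `∂Z`, since each of `e`, `f` has one endpoint in `Z` and one outside. Hence the tree edges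
of `∂Z` pairwise intersect, and pairwise intersecting edges of a triangle-free graph (here: a tree)
share a vertex.
-/

namespace SimpleGraph

variable {T : SimpleGraph V}

theorem IsAcyclic.cliqueFree_three (hT : T.IsAcyclic) : T.CliqueFree 3 := fun s hs => by
  obtain ⟨u, c, hc, -⟩ := is3Clique_iff_exists_cycle_length_three.mp ⟨s, hs⟩
  exact hT c hc

theorem CliqueFree.exists_forall_mem_of_pairwise_inter [Nonempty V] (hT : T.CliqueFree 3)
    {S : Set (Sym2 V)} (hS : S ⊆ T.edgeSet) (hmeet : ∀ e ∈ S, ∀ f ∈ S, ∃ v, v ∈ e ∧ v ∈ f) :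
    ∃ w, ∀ e ∈ S, w ∈ e := by
  -- Otherwise an edge `ab`, an edge missing `a` and an edge missing `b` form a triangle.
  by_contra! hmiss
  obtain ⟨e₀, he₀, -⟩ := hmiss (Classical.arbitrary V)
  induction e₀ with | h a b => ?_
  obtain ⟨e₁, he₁, ha₁⟩ := hmiss a
  obtain ⟨e₂, he₂, hb₂⟩ := hmiss b
  have hb₁ : b ∈ e₁ := by
    obtain ⟨v, hv₀, hv₁⟩ := hmeet _ he₀ _ he₁
    rcases Sym2.mem_iff.mp hv₀ with rfl | rfl <;> tauto
  obtain ⟨c, rfl⟩ := Sym2.mem_iff_exists.mp hb₁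
  have ha₂ : a ∈ e₂ := by
    obtain ⟨v, hv₀, hv₂⟩ := hmeet _ he₀ _ he₂
    rcases Sym2.mem_iff.mp hv₀ with rfl | rfl <;> tauto
  obtain ⟨d, rfl⟩ := Sym2.mem_iff_exists.mp ha₂
  have hcd : c = d := by
    obtain ⟨v, hv₁, hv₂⟩ := hmeet _ he₁ _ he₂
    simp only [Sym2.mem_iff] at hv₁ hv₂ ha₁ hb₂
    grind
  subst hcd
  classical
  exact hT {a, b, c} (is3Clique_triple_iff.mpr ⟨hS he₀, hS he₂, hS he₁⟩)

theorem reachable_deleteEdges_or_of_walk {x y u v : V} (p : T.Walk u v)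
    (hu : (T.deleteEdges {s(x, y)}).Reachable x u ∨ (T.deleteEdges {s(x, y)}).Reachable y u) :
    (T.deleteEdges {s(x, y)}).Reachable x v ∨ (T.deleteEdges {s(x, y)}).Reachable y v := by
  induction p with
  | nil => exact hu
  | @cons a c b hac _ ih =>
    apply ih
    by_cases hg : s(a, c) = s(x, y)
    · rcases Sym2.eq_iff.mp hg with ⟨rfl, rfl⟩ | ⟨rfl, rfl⟩
      · exact Or.inr .rfl
      · exact Or.inl .rfl
    · have hadj : (T.deleteEdges {s(x, y)}).Adj a c := deleteEdges_adj.mpr ⟨hac, hg⟩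
      exact hu.imp (·.trans hadj.reachable) (·.trans hadj.reachable)

theorem Preconnected.reachable_deleteEdges_or (hT : T.Preconnected) (x y v : V) :
    (T.deleteEdges {s(x, y)}).Reachable x v ∨ (T.deleteEdges {s(x, y)}).Reachable y v :=
  reachable_deleteEdges_or_of_walk (hT x v).some (Or.inl .rfl)

theorem mem_treeSide_of_adj {u x y : V} {g : Sym2 V} (hx : x ∈ treeSide T u g)
    (hxy : T.Adj x y) (hg : s(x, y) ≠ g) : y ∈ treeSide T u g :=
  hx.trans (deleteEdges_adj.mpr ⟨hxy, hg⟩).reachable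

theorem IsAcyclic.not_reachable_deleteEdges_of_isPath_cons (hT : T.IsAcyclic) {u c v : V}
    {h : T.Adj u c} {p : T.Walk c v} (hp : (Walk.cons h p).IsPath) :
    ¬ (T.deleteEdges {s(u, c)}).Reachable u v := by
  have hbridge : ¬ (T.deleteEdges {s(u, c)}).Reachable u c :=
    isAcyclic_iff_forall_adj_isBridge.mp hT h
  have hrest : (T.deleteEdges {s(u, c)}).Reachable c v :=
    reachable_deleteEdges_iff_exists_walk.mpr
      ⟨p, fun hp' => ((Walk.cons_isPath_iff h p).mp hp).2 (p.fst_mem_support_of_mem_edges hp')⟩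
  exact fun huv => hbridge (huv.trans hrest.symm)

theorem IsAcyclic.exists_treeSide_separating_of_reachable (hT : T.IsAcyclic) {a a' b b' : V}
    (he : T.Adj a a') (hf : T.Adj b b')
    (h₁ : (T.deleteEdges {s(a, a')}).Reachable a' b')
    (h₂ : (T.deleteEdges {s(b, b')}).Reachable a' b') (hne : a' ≠ b') :
    ∃ x y, T.Adj x y ∧ (∀ v ∈ s(a, a'), v ∈ treeSide T x s(x, y)) ∧
      ∀ v ∈ s(b, b'), v ∉ treeSide T x s(x, y) := by
  obtain ⟨p, hp⟩ := (h₁.mono (deleteEdges_le _)).exists_isPath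
  cases p with
  | nil => exact absurd rfl hne
  | @cons _ c _ h p =>
    have hsep := hT.not_reachable_deleteEdges_of_isPath_cons hp
    have hge : s(a', a) ≠ s(a', c) := fun hg => hsep (Sym2.eq_swap.trans hg ▸ h₁)
    have hgf : s(b, b') ≠ s(a', c) := fun hg => hsep (hg ▸ h₂)
    have ha' : a' ∈ treeSide T a' s(a', c) := .rfl
    have hb' : b' ∉ treeSide T a' s(a', c) := hsep
    refine ⟨a', c, h, ?_, ?_⟩
    · rintro v hv
      rcases Sym2.mem_iff.mp hv with rfl | rfl
      · exact mem_treeSide_of_adj ha' he.symm hge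
      · exact ha'
    · rintro v hv
      rcases Sym2.mem_iff.mp hv with rfl | rfl
      · exact fun hb => hb' (mem_treeSide_of_adj hb hf hgf)
      · exact hb'

theorem IsTree.exists_treeSide_separating (hT : T.IsTree) {e f : Sym2 V}
    (he : e ∈ T.edgeSet) (hf : f ∈ T.edgeSet) (hdisj : ∀ v ∈ e, v ∉ f) :
    ∃ x y, T.Adj x y ∧ (∀ v ∈ e, v ∈ treeSide T x s(x, y)) ∧
      ∀ v ∈ f, v ∉ treeSide T x s(x, y) := by
  induction e with | h a a' => ?_
  induction f with | h b b' => ?_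
  have hef : s(b, b') ∉ ({s(a, a')} : Set (Sym2 V)) :=
    fun h => hdisj b (h ▸ Sym2.mem_mk_left _ _) (Sym2.mem_mk_left _ _)
  -- Orient `s(a, a')` and `s(b, b')` so that `a'` and `b'` are the endpoints facing each other.
  wlog h₁ : (T.deleteEdges {s(a, a')}).Reachable a' b generalizing a a'
  · have h₁' := (hT.connected.preconnected.reachable_deleteEdges_or a a' b).resolve_right h₁
    rw [Sym2.eq_swap (a := a)] at he hdisj hef h₁' ⊢
    exact this a' a he hdisj hef h₁'
  wlog h₂ : (T.deleteEdges {s(b, b')}).Reachable b' a' generalizing b b'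
  · have h₂' := (hT.connected.preconnected.reachable_deleteEdges_or b b' a').resolve_right h₂
    have h₁' : (T.deleteEdges {s(a, a')}).Reachable a' b' :=
      h₁.trans (deleteEdges_adj.mpr ⟨hf, hef⟩).reachable
    rw [Sym2.eq_swap (a := b)] at hf hdisj hef h₂' ⊢
    exact this b' b hf hdisj hef h₁' h₂'
  exact hT.isAcyclic.exists_treeSide_separating_of_reachable he hf
    (h₁.trans (deleteEdges_adj.mpr ⟨hf, hef⟩).reachable) h₂.symm
    (fun h => hdisj a' (Sym2.mem_mk_right _ _) (h ▸ Sym2.mem_mk_right _ _))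

end SimpleGraph

theorem inter_nonempty_of_mem_cutEdges {G : SimpleGraph V} {Z X : Set V} {e : Sym2 V}
    (he : e ∈ cutEdges G Z) (heX : ∀ v ∈ e, v ∈ X) : (Z ∩ X).Nonempty ∧ (Zᶜ ∩ X).Nonempty := by
  obtain ⟨-, u, v, rfl, hu, hv⟩ := he
  exact ⟨⟨u, hu, heX u (Sym2.mem_mk_left _ _)⟩, ⟨v, hv, heX v (Sym2.mem_mk_right _ _)⟩⟩

theorem crossing_of_mem_cutEdges {G : SimpleGraph V} {Z X : Set V} {e f : Sym2 V}
    (he : e ∈ cutEdges G Z) (hf : f ∈ cutEdges G Z) (heX : ∀ v ∈ e, v ∈ X)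
    (hfX : ∀ v ∈ f, v ∉ X) : Crossing Z X :=
  let ⟨hZX, hZcX⟩ := inter_nonempty_of_mem_cutEdges he heX
  let ⟨hZXc, hZcXc⟩ := inter_nonempty_of_mem_cutEdges (X := Xᶜ) hf hfX
  ⟨hZX, hZXc, hZcX, hZcXc⟩

theorem isKCut_treeSide {G T : SimpleGraph V} {K : ℕ} (hG : KEdgeConnected G K)
    (hT : CongAtMost G T K) {x y : V} (hxy : T.Adj x y) (hne : treeSide T x s(x, y) ≠ Set.univ) :
    IsKCut G K (treeSide T x s(x, y)) :=
  ⟨⟨x, .rfl⟩, hne, le_antisymm (hT x y hxy) (hG.2.2 _ ⟨x, .rfl⟩ hne)⟩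

theorem tree_edges_in_noncrossing_cut_common_endpoint_general {V : Type*} (K : ℕ)
    (G : SimpleGraph V) (hG : KEdgeConnected G K)
    (T : SimpleGraph V) (hTtree : T.IsTree) (hTcong : CongAtMost G T K)
    (Z : Set V)
    (hnc : ∀ Y : Set V, IsKCut G K Y → ¬ Crossing Z Y) :
    ∃ w : V, ∀ u v : V, T.Adj u v → s(u, v) ∈ cutEdges G Z → u = w ∨ v = w := by
  have hmeet : ∀ e ∈ T.edgeSet ∩ cutEdges G Z, ∀ f ∈ T.edgeSet ∩ cutEdges G Z,
      ∃ v, v ∈ e ∧ v ∈ f := by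
    rintro e ⟨heT, heZ⟩ f ⟨hfT, hfZ⟩
    by_contra! hdisj
    obtain ⟨x, y, hxy, heX, hfX⟩ := hTtree.exists_treeSide_separating heT hfT hdisj
    have hne : treeSide T x s(x, y) ≠ Set.univ :=
      fun h => hfX _ (Sym2.out_fst_mem f) (h ▸ Set.mem_univ _)
    exact hnc _ (isKCut_treeSide hG hTcong hxy hne) (crossing_of_mem_cutEdges heZ hfZ heX hfX)
  have := hTtree.connected.nonempty
  obtain ⟨w, hw⟩ := hTtree.isAcyclic.cliqueFree_three.exists_forall_mem_of_pairwise_inter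
    Set.inter_subset_left hmeet
  exact ⟨w, fun u v huv huvZ => by simpa [eq_comm] using hw _ ⟨huv, huvZ⟩⟩

/-- If `∂Z` is a `K`-cut not crossing any `K`-cut of `G`, then all
edges of a congestion-`K` spanning tree `T̃` crossing `∂Z` share a common endpoint. -/
theorem tree_edges_in_noncrossing_cut_common_endpoint {V : Type*} [Fintype V] (K : ℕ)
    (G : SimpleGraph V) (hG : KEdgeConnected G K)
    (T : SimpleGraph V) (hTle : T ≤ G) (hTtree : T.IsTree) (hTcong : CongAtMost G T K)
    (Z : Set V) (hZ : IsKCut G K Z)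
    (hnc : ∀ Y : Set V, IsKCut G K Y → ¬ Crossing Z Y) :
    ∃ w : V, ∀ u v : V, T.Adj u v → s(u, v) ∈ cutEdges G Z → u = w ∨ v = w :=
  tree_edges_in_noncrossing_cut_common_endpoint_general K G hG T hTtree hTcong Z hnc
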